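/- If two knowledge states s and s' are strongly equivalent in an evolution frame EF (i.e., Bel(s + E_1,...,E_k) = Bel(s' + E_1,...,E_k) for every finite sequence of events E_1,...,E_k, k ≥ 0), then for every state formula φ of the branching-time logic EKBL, EF, s ⊨ φ if and only if EF, s' ⊨ φ. -/
import Mathlib


mutual
inductive SForm (Rule : Type) : Type
  | atom : Rule → SForm Rule
  | conj : SForm Rule → SForm Rule → SForm Rule
  | nnot : SForm Rule → SForm Rule
  | ex : EForm Rule → SForm Rule
  | all : EForm Rule → SForm Rule
inductive EForm (Rule : Type) : Type
  | next : SForm Rule → EForm Rule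
  | untl : SForm Rule → SForm Rule → EForm Rule
end

/-- A path in a transition system. -/
def IsPath {σ : Type} (R : σ → σ → Prop) (p : ℕ → σ) : Prop :=
  ∀ i, R (p i) (p (i + 1))

mutual
/-- Satisfaction of EKBL state formulas over a Kripke-style structure with
    states `σ`, transition relation `R`, and labelling `L`. -/
def SatS {Rule σ : Type} (R : σ → σ → Prop) (L : σ → Set Rule) : σ → SForm Rule → Prop
  | s, .atom r => r ∈ L s
  | s, .conj φ ψ => SatS R L s φ ∧ SatS R L s ψ
  | s, .nnot φ => ¬ SatS R L s φ
  | s, .ex φ => ∃ p : ℕ → σ, IsPath R p ∧ p 0 = s ∧ SatE R L p φ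
  | s, .all φ => ∀ p : ℕ → σ, IsPath R p → p 0 = s → SatE R L p φ
/-- Satisfaction of EKBL evolution formulas along a path. -/
def SatE {Rule σ : Type} (R : σ → σ → Prop) (L : σ → Set Rule) : (ℕ → σ) → EForm Rule → Prop
  | p, .next φ => SatS R L (p 1) φ
  | p, .untl φ ψ => ∃ i, SatS R L (p i) ψ ∧ ∀ j, j < i → SatS R L (p j) φ
end

structure KState (Rule Event : Type) : Type where
  kb : Set Rule
  events : List Event

/-- Append a sequence of events to a knowledge state. -/
def KState.append {Rule Event : Type} (s : KState Rule Event) (es : List Event) :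
    KState Rule Event := ⟨s.kb, s.events ++ es⟩

/-- All events of the list belong to the event class `EC`. -/
def InEC {Event : Type} (EC : Set Event) (es : List Event) : Prop := ∀ E ∈ es, E ∈ EC

/-- Successor relation on knowledge states induced by the event class `EC`. -/
def Succ {Rule Event : Type} (EC : Set Event) (s s' : KState Rule Event) : Prop :=
  ∃ E ∈ EC, s' = s.append [E]

/-- Strong equivalence of knowledge states with respect to belief operator `B`. -/
def StrongEquiv {Rule Event : Type} (B : KState Rule Event → Set Rule) (EC : Set Event)
    (s s' : KState Rule Event) : Prop :=
  ∀ es : List Event, InEC EC es → B (s.append es) = B (s'.append es)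

/-- k-equivalence of knowledge states. -/
def KEquiv {Rule Event : Type} (B : KState Rule Event → Set Rule) (EC : Set Event) (k : ℕ)
    (s s' : KState Rule Event) : Prop :=
  ∀ es : List Event, InEC EC es → es.length ≤ k → B (s.append es) = B (s'.append es)

lemma KState.append_append {Rule Event : Type} (s : KState Rule Event) (a b : List Event) :
    (s.append a).append b = s.append (a ++ b) := by
  simp [KState.append]

lemma StrongEquiv.symm' {Rule Event : Type} {B : KState Rule Event → Set Rule} {EC : Set Event}
    {s s' : KState Rule Event} (h : StrongEquiv B EC s s') : StrongEquiv B EC s' s :=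
  fun es hes => (h es hes).symm

lemma StrongEquiv.bel {Rule Event : Type} {B : KState Rule Event → Set Rule} {EC : Set Event}
    {s s' : KState Rule Event} (h : StrongEquiv B EC s s') : B s = B s' := by
  have := h [] (by intro E hE; simp at hE)
  simpa [KState.append] using this

lemma StrongEquiv.step {Rule Event : Type} {B : KState Rule Event → Set Rule} {EC : Set Event}
    {s s' : KState Rule Event} (h : StrongEquiv B EC s s') {E : Event} (hE : E ∈ EC) :
    StrongEquiv B EC (s.append [E]) (s'.append [E]) := by
  intro es hes
  rw [KState.append_append, KState.append_append]
  exact h (E :: es) (by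
    intro x hx
    rcases List.mem_cons.mp hx with rfl | hx
    · exact hE
    · exact hes x hx)

lemma exists_match {Rule Event : Type} {B : KState Rule Event → Set Rule} {EC : Set Event}
    {s s' : KState Rule Event} (h : StrongEquiv B EC s s')
    (p : ℕ → KState Rule Event) (hp : IsPath (Succ EC) p) (h0 : p 0 = s) :
    ∃ q : ℕ → KState Rule Event, IsPath (Succ EC) q ∧ q 0 = s' ∧
      ∀ i, StrongEquiv B EC (p i) (q i) := by
  choose E hE hpe using hp
  refine ⟨fun n => Nat.rec s' (fun i qi => qi.append [E i]) n, fun i => ⟨E i, hE i, rfl⟩, rfl, ?_⟩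
  intro i
  induction i with
  | zero => simpa [h0] using h
  | succ n ih =>
      rw [hpe n]
      exact ih.step (hE n)

mutual
theorem satS_strongEquiv {Rule Event : Type} {B : KState Rule Event → Set Rule} {EC : Set Event}
    (s s' : KState Rule Event) (h : StrongEquiv B EC s s') (φ : SForm Rule) :
    SatS (Succ EC) B s φ ↔ SatS (Succ EC) B s' φ := by
  cases φ with
  | atom r => simp only [SatS]; rw [h.bel]
  | conj φ ψ =>
      simp only [SatS]
      rw [satS_strongEquiv s s' h φ, satS_strongEquiv s s' h ψ]
  | nnot φ =>
      simp only [SatS]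
      rw [satS_strongEquiv s s' h φ]
  | ex φ =>
      simp only [SatS]
      constructor
      · rintro ⟨p, hp, h0, hsat⟩
        obtain ⟨q, hq, hq0, heq⟩ := exists_match h p hp h0
        exact ⟨q, hq, hq0, (satE_strongEquiv p q heq φ).mp hsat⟩
      · rintro ⟨p, hp, h0, hsat⟩
        obtain ⟨q, hq, hq0, heq⟩ := exists_match h.symm' p hp h0
        exact ⟨q, hq, hq0, (satE_strongEquiv p q heq φ).mp hsat⟩
  | all φ =>
      simp only [SatS]
      constructor
      · intro H q hq hq0
        obtain ⟨p, hp, hp0, heq⟩ := exists_match h.symm' q hq hq0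
        exact (satE_strongEquiv q p heq φ).mpr (H p hp hp0)
      · intro H q hq hq0
        obtain ⟨p, hp, hp0, heq⟩ := exists_match h q hq hq0
        exact (satE_strongEquiv q p heq φ).mpr (H p hp hp0)

theorem satE_strongEquiv {Rule Event : Type} {B : KState Rule Event → Set Rule} {EC : Set Event}
    (p q : ℕ → KState Rule Event) (heq : ∀ i, StrongEquiv B EC (p i) (q i)) (φ : EForm Rule) :
    SatE (Succ EC) B p φ ↔ SatE (Succ EC) B q φ := by
  cases φ with
  | next φ =>
      simp only [SatE]
      exact satS_strongEquiv _ _ (heq 1) φ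
  | untl φ ψ =>
      simp only [SatE]
      constructor
      · rintro ⟨i, hψ, hφ⟩
        exact ⟨i, (satS_strongEquiv _ _ (heq i) ψ).mp hψ,
          fun j hj => (satS_strongEquiv _ _ (heq j) φ).mp (hφ j hj)⟩
      · rintro ⟨i, hψ, hφ⟩
        exact ⟨i, (satS_strongEquiv _ _ (heq i) ψ).mpr hψ,
          fun j hj => (satS_strongEquiv _ _ (heq j) φ).mpr (hφ j hj)⟩
end

/-- Strongly equivalent knowledge states satisfy exactly the same
    EKBL state formulas in the evolution frame. -/
theorem strongEquiv_sat_iff {Rule Event : Type} (B : KState Rule Event → Set Rule)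
    (EC : Set Event) (s s' : KState Rule Event) (h : StrongEquiv B EC s s')
    (φ : SForm Rule) :
    SatS (Succ EC) B s φ ↔ SatS (Succ EC) B s' φ := by
  exact satS_strongEquiv s s' h φ
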